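/- In a two-player expectation game where player 1 controls variable p₁ and player 2 controls p₂, each with strategy set L_k and payoff formulas φ₁ = p₁, φ₂ = p₂, goals Φ₁ = ¬d(E p₁, E p₂) (value 1 - |E₁ - E₂|) and Φ₂ = d(E p₁, E p₂) (value |E₁ - E₂|), there is no Nash equilibrium: there is no pair of probability distributions (π₁, π₂) on L_k such that π₁ maximizes 1 - |exp(π₁) - exp(π₂)| given π₂ and π₂ maximizes |exp(π₁) - exp(π₂)| given π₁, where exp(π) := Σ_{s∈L_k} π(s)·s. -/
import Mathlib


/-- A mixed strategy on L_k = {0, 1/k, ..., 1}: nonnegative weights summing to 1,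
indexed by i ∈ {0,...,k} representing the pure strategy i/k. -/
def IsDist {k : ℕ} (π : Fin (k+1) → ℝ) : Prop :=
  (∀ i, 0 ≤ π i) ∧ ∑ i, π i = 1

/-- Expected value of a mixed strategy on L_k. -/
noncomputable def expVal {k : ℕ} (π : Fin (k+1) → ℝ) : ℝ :=
  ∑ i, π i * ((i : ℕ) / k : ℝ)

/-- Pure strategy j. -/
noncomputable def pureDist {k : ℕ} (j : Fin (k+1)) : Fin (k+1) → ℝ :=
  fun i => if i = j then 1 else 0

lemma pureDist_isDist {k : ℕ} (j : Fin (k+1)) : IsDist (pureDist j) := by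
  constructor
  · intro i; unfold pureDist; split <;> norm_num
  · simp [pureDist]

lemma expVal_pure {k : ℕ} (j : Fin (k+1)) : expVal (pureDist j) = ((j : ℕ) : ℝ) / k := by
  unfold expVal pureDist
  rw [Finset.sum_eq_single j]
  · simp
  · intro b _ hb; simp [hb]
  · simp

lemma expVal_nonneg {k : ℕ} {π : Fin (k+1) → ℝ} (h : IsDist π) : 0 ≤ expVal π := by
  apply Finset.sum_nonneg
  intro i _
  exact mul_nonneg (h.1 i) (by positivity)

lemma expVal_le_one {k : ℕ} {π : Fin (k+1) → ℝ} (hk : 1 ≤ k) (h : IsDist π) :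
    expVal π ≤ 1 := by
  calc expVal π ≤ ∑ i, π i := by
        apply Finset.sum_le_sum
        intro i _
        have h1 : ((i : ℕ) : ℝ) / k ≤ 1 := by
          rw [div_le_one (by exact_mod_cast Nat.pos_of_ne_zero (by omega))]
          exact_mod_cast Nat.lt_succ_iff.mp i.isLt
        calc π i * ((i : ℕ) / k : ℝ) ≤ π i * 1 := by
              exact mul_le_mul_of_nonneg_left h1 (h.1 i)
          _ = π i := mul_one _
    _ = 1 := h.2

/-- The expectation matching-pennies game has no Nash equilibrium:
player 1 (utility 1 - |E₁ - E₂|) and player 2 (utility |E₁ - E₂|) cannot both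
be playing best responses. -/
theorem expectation_game_no_nash (k : ℕ) (hk : 1 ≤ k) :
    ¬ ∃ (π₁ π₂ : Fin (k+1) → ℝ), IsDist π₁ ∧ IsDist π₂ ∧
      (∀ π₁' : Fin (k+1) → ℝ, IsDist π₁' →
        1 - |expVal π₁' - expVal π₂| ≤ 1 - |expVal π₁ - expVal π₂|) ∧
      (∀ π₂' : Fin (k+1) → ℝ, IsDist π₂' →
        |expVal π₁ - expVal π₂'| ≤ |expVal π₁ - expVal π₂|) := by
  rintro ⟨π₁, π₂, h₁, h₂, hbr₁, hbr₂⟩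
  have hkR : (k : ℝ) ≠ 0 := by exact_mod_cast Nat.pos_of_ne_zero (by omega) |>.ne'
  set e₂ := expVal π₂ with he₂
  -- player 1 can match: mixture of pure 0 and pure last with weight e₂ on last
  have he₂0 : 0 ≤ e₂ := expVal_nonneg h₂
  have he₂1 : e₂ ≤ 1 := expVal_le_one hk h₂
  set π' : Fin (k+1) → ℝ := fun i => (1 - e₂) * pureDist 0 i + e₂ * pureDist (Fin.last k) i
    with hπ'
  have hπ'dist : IsDist π' := by
    constructor
    · intro i
      apply add_nonneg
      · exact mul_nonneg (by linarith) ((pureDist_isDist 0).1 i)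
      · exact mul_nonneg he₂0 ((pureDist_isDist _).1 i)
    · rw [hπ']
      simp only [Finset.sum_add_distrib, ← Finset.mul_sum]
      rw [(pureDist_isDist (0 : Fin (k+1))).2, (pureDist_isDist (Fin.last k)).2]
      ring
  have hexpπ' : expVal π' = e₂ := by
    unfold expVal
    simp only [hπ', add_mul, Finset.sum_add_distrib, mul_assoc, ← Finset.mul_sum]
    have h0 : expVal (pureDist (0 : Fin (k+1))) = 0 := by
      rw [expVal_pure]; simp
    have hl : expVal (pureDist (Fin.last k)) = 1 := by
      rw [expVal_pure]; simp [Fin.val_last, hkR]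
    unfold expVal at h0 hl
    rw [h0, hl]; ring
  have hmatch := hbr₁ π' hπ'dist
  rw [hexpπ'] at hmatch
  have heq : expVal π₁ = e₂ := by
    have : |expVal π₁ - e₂| ≤ 0 := by
      have := hmatch; simp at this
      calc |expVal π₁ - e₂| ≤ |e₂ - e₂| := by linarith
        _ = 0 := by simp
    have := abs_nonneg (expVal π₁ - e₂)
    have : |expVal π₁ - e₂| = 0 := le_antisymm ‹_› ‹_›
    have := abs_eq_zero.mp this
    linarith
  -- player 2 deviations to pure 0 and pure last
  have hd0 := hbr₂ (pureDist 0) (pureDist_isDist 0)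
  have hdl := hbr₂ (pureDist (Fin.last k)) (pureDist_isDist _)
  rw [expVal_pure] at hd0 hdl
  simp only [Fin.val_last] at hdl
  rw [heq] at hd0 hdl
  simp [sub_self] at hd0 hdl
  rw [div_self hkR] at hdl
  linarith
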